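/- Let P be a fence (zigzag) poset on n-1 elements whose Hasse diagram alternates between a ascending and b descending runs so that the total number of maximal chains' covering structure corresponds to a skew border strip with k-1 up-steps and n-k-1 down-steps (1 ≤ k ≤ n-1). Then the linear coefficient of the order polynomial Ω(P,t) equals (n-k-1)!·(k-1)!/(n-1)! = 1/((n-1)·binom(n-2,k-1)). -/

import Mathlib

open Finset Pointwise

/-- A matroid on a finite ground set `E ⊆ α`, given by its rank function. -/
structure Matr (α : Type) [DecidableEq α] where
  E : Finset α
  rk : Finset α → ℕ
  rk_inter : ∀ A, rk (A ∩ E) = rk A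
  rk_empty : rk ∅ = 0
  rk_le_card : ∀ A, A ⊆ E → rk A ≤ A.card
  rk_mono : ∀ ⦃A B : Finset α⦄, A ⊆ B → rk A ≤ rk B
  rk_submod : ∀ A B, rk (A ∪ B) + rk (A ∩ B) ≤ rk A + rk B

namespace Matr

variable {α : Type} [DecidableEq α]

/-- Crapo's beta invariant `β(M) = (-1)^{rk E} ∑_{A ⊆ E} (-1)^{|A|} rk(A)`. -/
def beta (M : Matr α) : ℤ :=
  (-1) ^ (M.rk M.E) * ∑ A ∈ M.E.powerset, (-1) ^ A.card * (M.rk A : ℤ)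

/-- A basis: an independent spanning subset of the ground set. -/
def IsBase (M : Matr α) (B : Finset α) : Prop :=
  B ⊆ M.E ∧ B.card = M.rk M.E ∧ M.rk B = B.card

def IsLoop (M : Matr α) (i : α) : Prop := i ∈ M.E ∧ M.rk {i} = 0

def IsColoop (M : Matr α) (i : α) : Prop := i ∈ M.E ∧ ∀ B, M.IsBase B → i ∈ B

/-- A matroid is disconnected if its ground set splits into two nonempty parts
on which the rank function is additive. -/
def IsDisconnected (M : Matr α) : Prop :=
  ∃ E₁ E₂ : Finset α, E₁ ∪ E₂ = M.E ∧ Disjoint E₁ E₂ ∧ E₁.Nonempty ∧ E₂.Nonempty ∧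
    ∀ A ⊆ M.E, M.rk A = M.rk (A ∩ E₁) + M.rk (A ∩ E₂)

end Matr

/-- The base polytope `P(M) = conv{ e_B : B a basis of M }`. -/
def basePolytope {α : Type} [DecidableEq α] [Fintype α] (M : Matr α) : Set (α → ℝ) :=
  convexHull ℝ {x | ∃ B, M.IsBase B ∧ x = fun i => if i ∈ B then (1 : ℝ) else 0}

/-- `p` is the Ehrhart polynomial of the base polytope of `M`:
for every positive integer `t`, `p(t)` is the number of lattice points of `t·P(M)`. -/
def IsEhrhart {α : Type} [DecidableEq α] [Fintype α] (M : Matr α) (p : Polynomial ℚ) : Prop :=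
  ∀ t : ℕ, 0 < t →
    p.eval (t : ℚ) =
      Set.ncard {x : α → ℤ | (fun i => (x i : ℝ)) ∈ (t : ℝ) • basePolytope M}


namespace FenceAux
open Polynomial



inductive E : Type where
  | le | ge | eq | fr
deriving DecidableEq

def relB : E → ℕ → ℕ → Bool
  | E.le, v, w => decide (v ≤ w)
  | E.ge, v, w => decide (w ≤ v)
  | E.eq, v, w => v == w
  | E.fr, _, _ => true

def Wc : List E → ℕ → ℕ → ℕ
  | [], _, _ => 1
  | e :: c, t, v => ∑ w ∈ Finset.range t, if relB e v w then Wc c t w else 0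

def Nn (c : List E) (t : ℕ) : ℕ := ∑ v ∈ Finset.range t, Wc c t v

lemma Wc_fr_split (c₁ c₂ : List E) (t v : ℕ) :
    Wc (c₁ ++ E.fr :: c₂) t v = Wc c₁ t v * Nn c₂ t := by
  induction c₁ generalizing v with
  | nil => simp [Wc, Nn, relB]
  | cons e c₁ ih => simp [Wc, ih, ite_mul, Finset.sum_mul]

lemma Nn_fr_split (c₁ c₂ : List E) (t : ℕ) :
    Nn (c₁ ++ E.fr :: c₂) t = Nn c₁ t * Nn c₂ t := by
  simp [Nn, Wc_fr_split, Finset.sum_mul]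

lemma Wc_exchange (c₁ c₂ : List E) (t v : ℕ) (hv : v < t) :
    Wc (c₁ ++ E.ge :: c₂) t v + Wc (c₁ ++ E.le :: c₂) t v =
      Wc (c₁ ++ E.fr :: c₂) t v + Wc (c₁ ++ E.eq :: c₂) t v := by
  induction c₁ generalizing v with
  | nil =>
    simp only [List.nil_append, Wc, ← Finset.sum_add_distrib]
    refine Finset.sum_congr rfl fun w hw => ?_
    rcases Nat.lt_trichotomy v w with h | h | h
    · simp [relB, h.le, Nat.not_le.2 h, Nat.ne_of_lt h]
    · simp [relB, h]
    · simp [relB, h.le, Nat.not_le.2 h, (Nat.ne_of_lt h).symm]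
  | cons e c₁ ih =>
    simp only [List.cons_append, Wc, ← Finset.sum_add_distrib]
    refine Finset.sum_congr rfl fun w hw => ?_
    by_cases hb : relB e v w
    · simpa [hb] using ih w (Finset.mem_range.1 hw)
    · simp [hb]

lemma Nn_exchange (c₁ c₂ : List E) (t : ℕ) :
    Nn (c₁ ++ E.ge :: c₂) t + Nn (c₁ ++ E.le :: c₂) t =
      Nn (c₁ ++ E.fr :: c₂) t + Nn (c₁ ++ E.eq :: c₂) t := by
  simp only [Nn, ← Finset.sum_add_distrib]
  exact Finset.sum_congr rfl fun v hv => Wc_exchange _ _ _ _ (Finset.mem_range.1 hv)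

lemma hockey (j M : ℕ) : ∑ u ∈ Finset.range M, Nat.choose (u + j) j = Nat.choose (M + j) (j + 1) := by
  induction M with
  | zero => simp [Nat.choose_eq_zero_of_lt]
  | succ M ih =>
    rw [Finset.sum_range_succ, ih]
    have := Nat.choose_succ_succ' (M + j) j
    have h2 : M + 1 + j = M + j + 1 := by omega
    rw [h2]
    omega





lemma Wc_frfree (c : List E) (hg : E.ge ∉ c) (hf : E.fr ∉ c) (t v : ℕ) (hv : v < t) :
    Wc c t v = Nat.choose (t - 1 - v + c.count E.le) (c.count E.le) := by
  induction c generalizing v with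
  | nil => simp [Wc]
  | cons e c ih =>
    have hg' : E.ge ∉ c := fun h => hg (List.mem_cons_of_mem _ h)
    have hf' : E.fr ∉ c := fun h => hf (List.mem_cons_of_mem _ h)
    cases e with
    | ge => exact absurd List.mem_cons_self hg
    | fr => exact absurd List.mem_cons_self hf
    | eq =>
      have h1 : Wc (E.eq :: c) t v = ∑ w ∈ Finset.range t, if v = w then Wc c t w else 0 := by
        simp [Wc, relB]
      rw [h1, Finset.sum_ite_eq, if_pos (Finset.mem_range.2 hv), ih hg' hf' v hv]
      simp [List.count_cons]
    | le =>
      set j := c.count E.le with hj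
      have h1 : Wc (E.le :: c) t v = ∑ w ∈ Finset.Ico v t, Wc c t w := by
        rw [Wc, ← Finset.sum_filter]
        congr 1
        ext w; simp [Finset.mem_Ico, and_comm, relB]
      have h2 : ∑ w ∈ Finset.Ico v t, Wc c t w
          = ∑ u ∈ Finset.range (t - v), Nat.choose (t - 1 - (v + u) + j) j := by
        rw [Finset.sum_Ico_eq_sum_range]
        refine Finset.sum_congr rfl fun u hu => ?_
        exact ih hg' hf' (v + u) (by simp at hu; omega)
      have h3 : ∑ u ∈ Finset.range (t - v), Nat.choose (t - 1 - (v + u) + j) j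
          = ∑ u ∈ Finset.range (t - v), Nat.choose (u + j) j := by
        have := Finset.sum_range_reflect (fun u => Nat.choose (u + j) j) (t - v)
        rw [← this]
        refine Finset.sum_congr rfl fun u hu => ?_
        simp at hu
        congr 2
        omega
      rw [h1, h2, h3, hockey]
      have hc : (E.le :: c).count E.le = j + 1 := by simp [List.count_cons, hj]
      rw [hc]
      congr 1
      omega

lemma Nn_frfree (c : List E) (hg : E.ge ∉ c) (hf : E.fr ∉ c) (t : ℕ) :
    Nn c t = Nat.choose (t + c.count E.le) (c.count E.le + 1) := by
  set j := c.count E.le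
  have h1 : Nn c t = ∑ v ∈ Finset.range t, Nat.choose (t - 1 - v + j) j := by
    refine Finset.sum_congr rfl fun v hv => ?_
    exact Wc_frfree c hg hf t v (Finset.mem_range.1 hv)
  rw [h1]
  have h2 : ∑ v ∈ Finset.range t, Nat.choose (t - 1 - v + j) j
      = ∑ u ∈ Finset.range t, Nat.choose (u + j) j :=
    Finset.sum_range_reflect (fun u => Nat.choose (u + j) j) t
  rw [h2, hockey]




noncomputable def ascPoly (j : ℕ) : Polynomial ℚ := ∏ i ∈ Finset.range (j + 1), (X + C (i : ℚ))

lemma ascPoly_eval (j : ℕ) (t : ℕ) :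
    (ascPoly j).eval (t : ℚ) = (Nat.factorial (j + 1)) * (Nat.choose (t + j) (j + 1)) := by
  induction j with
  | zero => simp [ascPoly]
  | succ j ih =>
    rw [ascPoly, Finset.prod_range_succ, ← ascPoly]
    rw [eval_mul, ih]
    have key : (t + j + 1) * Nat.choose (t + j) (j + 1) = Nat.choose (t + j + 1) (j + 2) * (j + 2) :=
      Nat.add_one_mul_choose_eq (t + j) (j + 1)
    have : ((t : ℚ) + (j : ℚ) + 1) * (Nat.choose (t + j) (j + 1) : ℚ)
        = (Nat.choose (t + j + 1) (j + 2) : ℚ) * ((j : ℚ) + 2) := by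
      have := congrArg (fun x : ℕ => (x : ℚ)) key
      push_cast at this ⊢
      linarith [this]
    simp only [eval_add, eval_X, eval_C]
    rw [Nat.factorial_succ (j + 1)]
    push_cast
    have h3 : (t : ℚ) + (j + 1) = (t:ℚ) + j + 1 := by ring
    have h4 : ((t + (j+1)):ℕ) = t + j + 1 := by omega
    rw [h4]
    nlinarith [this]

lemma ascPoly_coeff0 (j : ℕ) : (ascPoly j).coeff 0 = 0 := by
  rw [Polynomial.coeff_zero_eq_eval_zero]
  have : (ascPoly j).eval 0 = (Nat.factorial (j+1)) * (Nat.choose (0 + j) (j + 1)) := by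
    simpa using ascPoly_eval j 0
  rw [this]
  simp [Nat.choose_eq_zero_of_lt]

lemma prod_range_cast_factorial (j : ℕ) :
    ∏ i ∈ Finset.range j, ((i:ℚ) + 1) = (Nat.factorial j : ℚ) := by
  induction j with
  | zero => simp
  | succ j ih => rw [Finset.prod_range_succ, ih, Nat.factorial_succ]; push_cast; ring

lemma ascPoly_coeff1 (j : ℕ) : (ascPoly j).coeff 1 = Nat.factorial j := by
  have h : ascPoly j = (∏ i ∈ Finset.range j, (X + C ((i:ℚ) + 1))) * X := by
    rw [ascPoly, Finset.prod_range_succ']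
    simp
  rw [h, Polynomial.coeff_mul_X, Polynomial.coeff_zero_eq_eval_zero]
  rw [Polynomial.eval_prod]
  simp only [eval_add, eval_X, eval_C, zero_add]
  rw [prod_range_cast_factorial]



noncomputable def S (j g : ℕ) : ℚ :=
  ∑ i ∈ Finset.range (g + 1), (-1 : ℚ) ^ i * (Nat.choose g i) / ((j : ℚ) + i + 1)

lemma S_zero (j : ℕ) : S j 0 = 1 / ((j : ℚ) + 1) := by simp [S]

lemma S_pascal (j g : ℕ) : S j (g + 1) = S j g - S (j + 1) g := by
  have hf0 : ((-1 : ℚ) ^ 0 * (Nat.choose (g+1) 0) / ((j:ℚ) + 0 + 1)) = 1 / ((j:ℚ) + 1) := by simp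
  have step : S j (g + 1)
      = (∑ i ∈ Finset.range (g + 1), (-1 : ℚ) ^ (i+1) * (Nat.choose (g+1) (i+1)) / ((j : ℚ) + (i+1) + 1))
        + 1 / ((j:ℚ) + 1) := by
    rw [S, Finset.sum_range_succ' (fun i => (-1 : ℚ) ^ i * (Nat.choose (g+1) i) / ((j : ℚ) + i + 1)) (g+1)]
    push_cast
    ring_nf
    norm_num
  have split : ∀ i : ℕ, (-1 : ℚ) ^ (i+1) * (Nat.choose (g+1) (i+1)) / ((j : ℚ) + (i+1) + 1)
      = -((-1 : ℚ) ^ i * (Nat.choose g i) / (((j:ℚ)+1) + i + 1))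
        + (-1 : ℚ) ^ (i+1) * (Nat.choose g (i+1)) / ((j : ℚ) + (i+1) + 1) := by
    intro i
    have h := Nat.choose_succ_succ g i
    have : ((Nat.choose (g+1) (i+1) : ℚ)) = (Nat.choose g i : ℚ) + (Nat.choose g (i+1) : ℚ) := by
      rw [h]; push_cast; ring
    rw [this]
    push_cast
    ring
  have hsum : (∑ i ∈ Finset.range (g + 1), (-1 : ℚ) ^ (i+1) * (Nat.choose (g+1) (i+1)) / ((j : ℚ) + (i+1) + 1))
      = -S (j+1) g + (S j g - 1 / ((j:ℚ) + 1)) := by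
    rw [Finset.sum_congr rfl (fun i _ => split i), Finset.sum_add_distrib]
    congr 1
    · rw [Finset.sum_neg_distrib, S]
      push_cast
      ring_nf
    · -- ∑_{i∈range(g+1)} h2 (i+1) = S j g - h2 0 where h2 i = (-1)^i C(g,i)/(j+i+1)
      have e1 : (∑ i ∈ Finset.range (g + 2), (-1 : ℚ) ^ i * (Nat.choose g i) / ((j : ℚ) + i + 1))
          = (∑ i ∈ Finset.range (g + 1), (-1 : ℚ) ^ (i+1) * (Nat.choose g (i+1)) / ((j : ℚ) + (i+1) + 1))
            + 1 / ((j:ℚ)+1) := by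
        rw [Finset.sum_range_succ' (fun i => (-1 : ℚ) ^ i * (Nat.choose g i) / ((j : ℚ) + i + 1)) (g+1)]
        norm_num
      have e2 : (∑ i ∈ Finset.range (g + 2), (-1 : ℚ) ^ i * (Nat.choose g i) / ((j : ℚ) + i + 1)) = S j g := by
        rw [Finset.sum_range_succ, S]
        simp [Nat.choose_eq_zero_of_lt]
      rw [e2] at e1
      linarith [e1]
  rw [step, hsum]
  ring

lemma S_val (j g : ℕ) : S j g = (Nat.factorial j : ℚ) * (Nat.factorial g) / (Nat.factorial (j + g + 1)) := by
  induction g generalizing j with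
  | zero =>
    rw [S_zero]
    rw [Nat.factorial_succ]
    push_cast [Nat.factorial]
    rw [div_eq_div_iff (by positivity) (by positivity)]
    ring
  | succ g ih =>
    rw [S_pascal, ih, ih]
    have h1 : j + 1 + g + 1 = j + g + 2 := by omega
    have h2 : j + (g + 1) + 1 = j + g + 2 := by omega
    rw [h1, h2]
    have e1 : (Nat.factorial (j + g + 2) : ℚ) = (j + g + 2) * Nat.factorial (j + g + 1) := by
      rw [show j + g + 2 = (j + g + 1) + 1 by omega, Nat.factorial_succ]; push_cast; ring
    have e2 : (Nat.factorial (j + 1) : ℚ) = (j + 1) * Nat.factorial j := by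
      rw [Nat.factorial_succ]; push_cast; ring
    have e3 : (Nat.factorial (g + 1) : ℚ) = (g + 1) * Nat.factorial g := by
      rw [Nat.factorial_succ]; push_cast; ring
    rw [e1, e2, e3]
    have hjg1 : (Nat.factorial (j + g + 1) : ℚ) ≠ 0 := by positivity
    field_simp
    ring




def Ok (c : List E) {t : ℕ} (f : Fin (c.length + 1) → Fin t) : Prop :=
  ∀ (j : ℕ) (h : j < c.length),
    relB (c.get ⟨j, h⟩) (f ⟨j, by omega⟩) (f ⟨j + 1, by omega⟩) = true

instance (c : List E) (t : ℕ) : DecidablePred (fun f : Fin (c.length + 1) → Fin t => Ok c f) :=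
  fun _ => by unfold Ok; infer_instance

lemma ok_cons_iff (e : E) (c : List E) {t : ℕ} (f : Fin ((e :: c).length + 1) → Fin t) :
    Ok (e :: c) f ↔
      relB e (f ⟨0, by simp⟩) (f ⟨1, by simp⟩) = true ∧
        Ok c (Fin.tail (α := fun _ => Fin t) (n := c.length + 1) f) := by
  constructor
  · intro h
    refine ⟨h 0 (by simp), fun j hj => ?_⟩
    exact h (j + 1) (by simpa using hj)
  · rintro ⟨h0, h⟩ j hj
    match j, hj with
    | 0, _ => exact h0
    | (j' + 1), hj => exact h j' (by simpa using hj)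

lemma Wc_card (c : List E) (t : ℕ) : ∀ (v : ℕ) (hv : v < t),
    Wc c t v = Fintype.card {f : Fin (c.length + 1) → Fin t // Ok c f ∧ f ⟨0, by omega⟩ = ⟨v, hv⟩} := by
  induction c with
  | nil =>
    intro v hv
    rw [Wc]
    symm
    rw [Fintype.card_eq_one_iff]
    refine ⟨⟨fun _ => ⟨v, hv⟩, fun j hj => by simp at hj, rfl⟩, ?_⟩
    rintro ⟨g, hg, h0⟩
    apply Subtype.ext
    funext i
    show g i = ⟨v, hv⟩
    have hi : i = ⟨0, by omega⟩ := by
      apply Fin.ext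
      have := i.isLt
      simp only [List.length_nil] at this ⊢
      omega
    rw [hi]
    exact h0
  | cons e c ih =>
    intro v hv
    have Eqv1 : {f : Fin ((e :: c).length + 1) → Fin t // Ok (e :: c) f ∧ f ⟨0, by omega⟩ = ⟨v, hv⟩}
        ≃ {g : Fin (c.length + 1) → Fin t // Ok c g ∧ relB e v (g ⟨0, by omega⟩) = true} := by
      refine ⟨fun f => ⟨Fin.tail (α := fun _ => Fin t) (n := c.length + 1) f.1, ?_, ?_⟩,
        fun g => ⟨Fin.cons (α := fun _ => Fin t) ⟨v, hv⟩ g.1, ?_, rfl⟩, ?_, ?_⟩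
      · exact ((ok_cons_iff e c f.1).1 f.2.1).2
      · have h := ((ok_cons_iff e c f.1).1 f.2.1).1
        have h0 : (f.1 ⟨0, by omega⟩ : ℕ) = v := by rw [f.2.2]
        rw [h0] at h
        exact h
      · rw [ok_cons_iff]
        constructor
        · show relB e (Fin.cons (α := fun _ => Fin t) ⟨v, hv⟩ g.1 ⟨0, by omega⟩ : ℕ)
            (Fin.cons (α := fun _ => Fin t) ⟨v, hv⟩ g.1 (Fin.succ ⟨0, by omega⟩) : ℕ) = true
          rw [Fin.cons_succ]
          exact g.2.2
        · rw [Fin.tail_cons]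
          exact g.2.1
      · intro f
        apply Subtype.ext
        funext i
        show Fin.cons (⟨v, hv⟩ : Fin t) (Fin.tail f.1) i = f.1 i
        rcases i with ⟨j, hj⟩
        match j, hj with
        | 0, hj => exact f.2.2.symm
        | j + 1, hj => rfl
      · intro g
        apply Subtype.ext
        dsimp only
        funext i
        rcases i with ⟨j, hj⟩
        rfl
    rw [Fintype.card_congr Eqv1]
    have Eqv2 : {g : Fin (c.length + 1) → Fin t // Ok c g ∧ relB e v (g ⟨0, by omega⟩) = true}
        ≃ Σ w : Fin t, {g : Fin (c.length + 1) → Fin t //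
            (Ok c g ∧ g ⟨0, by omega⟩ = w) ∧ relB e v w = true} := by
      refine ⟨fun g => ⟨g.1 ⟨0, by omega⟩, g.1, ⟨g.2.1, rfl⟩, g.2.2⟩,
        fun p => ⟨p.2.1, p.2.2.1.1, by rw [p.2.2.1.2]; exact p.2.2.2⟩, fun g => rfl, ?_⟩
      rintro ⟨w, g, ⟨hok, h0⟩, hrel⟩
      subst h0
      rfl
    rw [Fintype.card_congr Eqv2, Fintype.card_sigma]
    have hcard : ∀ w : Fin t,
        Fintype.card {g : Fin (c.length + 1) → Fin t //
            (Ok c g ∧ g ⟨0, by omega⟩ = w) ∧ relB e v (w : ℕ) = true}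
          = if relB e v (w : ℕ) then Wc c t w else 0 := by
      intro w
      by_cases hb : relB e v (w : ℕ) = true
      · rw [if_pos hb, ih w w.isLt]
        apply Fintype.card_congr
        apply Equiv.subtypeEquivRight
        intro g
        constructor
        · rintro ⟨⟨hok, h0⟩, _⟩
          exact ⟨hok, by rw [h0]⟩
        · rintro ⟨hok, h0⟩
          exact ⟨⟨hok, by rw [h0]⟩, hb⟩
      · rw [if_neg hb, Fintype.card_eq_zero_iff]
        exact ⟨fun g => hb g.2.2⟩
    rw [Finset.sum_congr rfl (fun w _ => hcard w)]
    rw [show Wc (e :: c) t v = ∑ w ∈ Finset.range t, if relB e v w then Wc c t w else 0 from rfl]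
    rw [← Fin.sum_univ_eq_sum_range (fun w => if relB e v w then Wc c t w else 0) t]

lemma Nn_card (c : List E) (t : ℕ) :
    Nn c t = Fintype.card {f : Fin (c.length + 1) → Fin t // Ok c f} := by
  have Eqv : {f : Fin (c.length + 1) → Fin t // Ok c f}
      ≃ Σ w : Fin t, {f : Fin (c.length + 1) → Fin t // Ok c f ∧ f ⟨0, by omega⟩ = w} := by
    refine ⟨fun f => ⟨f.1 ⟨0, by omega⟩, f.1, f.2, rfl⟩, fun p => ⟨p.2.1, p.2.2.1⟩, fun f => rfl, ?_⟩
    rintro ⟨w, f, hok, h0⟩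
    subst h0
    rfl
  rw [Fintype.card_congr Eqv, Fintype.card_sigma]
  rw [Nn, ← Fin.sum_univ_eq_sum_range (fun v => Wc c t v) t]
  refine Finset.sum_congr rfl fun w _ => ?_
  exact Wc_card c t w w.isLt



lemma count_ofFn {L : ℕ} (g : Fin L → E) (x : E) :
    (List.ofFn g).count x = (Finset.univ.filter fun j => g j = x).card := by
  induction L with
  | zero => simp
  | succ L ih =>
    rw [List.ofFn_succ, List.count_cons, ih (fun i => g i.succ)]
    conv_rhs => rw [Finset.card_filter, Fin.sum_univ_succ]
    rw [Finset.card_filter]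
    simp [beq_iff_eq, add_comm]


noncomputable section

lemma coeff1_mul (P Q : Polynomial ℚ) :
    (P * Q).coeff 1 = P.coeff 0 * Q.coeff 1 + P.coeff 1 * Q.coeff 0 := by
  rw [Polynomial.coeff_mul]
  rw [Finset.Nat.antidiagonal_succ]
  simp [Finset.Nat.antidiagonal_zero, Prod.map]

lemma T0 (N : ℕ) : ∀ (c : List E), c.length ≤ N → E.ge ∉ c →
    ∃ P : Polynomial ℚ, (∀ t : ℕ, P.eval (t : ℚ) = Nn c t) ∧ P.coeff 0 = 0 ∧
      P.coeff 1 = (if E.fr ∈ c then 0 else 1 / ((c.count E.le : ℚ) + 1)) := by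
  induction N with
  | zero =>
    intro c hlen hg
    have hc : c = [] := List.length_eq_zero_iff.1 (Nat.le_zero.1 hlen)
    subst hc
    refine ⟨Polynomial.X, ?_, by simp, by simp⟩
    intro t
    rw [Nn_frfree [] (by simp) (by simp)]
    simp
  | succ N ih =>
    intro c hlen hg
    by_cases hf : E.fr ∈ c
    · obtain ⟨c₁, c₂, rfl⟩ := List.append_of_mem hf
      have h1 : c₁.length ≤ N := by
        have := hlen; simp [List.length_append] at this ⊢; omega
      have h2 : c₂.length ≤ N := by
        have := hlen; simp [List.length_append] at this ⊢; omega
      have hg1 : E.ge ∉ c₁ := fun h => hg (by simp [h])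
      have hg2 : E.ge ∉ c₂ := fun h => hg (by simp [h])
      obtain ⟨P₁, he1, h01, h11⟩ := ih c₁ h1 hg1
      obtain ⟨P₂, he2, h02, h12⟩ := ih c₂ h2 hg2
      refine ⟨P₁ * P₂, ?_, ?_, ?_⟩
      · intro t
        rw [Polynomial.eval_mul, he1, he2, Nn_fr_split]
        push_cast; ring
      · rw [Polynomial.mul_coeff_zero, h01]; ring
      · rw [coeff1_mul, h01, h02]
        simp
    · set j := c.count E.le with hj
      refine ⟨Polynomial.C ((Nat.factorial (j + 1) : ℚ))⁻¹ * ascPoly j, ?_, ?_, ?_⟩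
      · intro t
        rw [Polynomial.eval_mul, Polynomial.eval_C, ascPoly_eval,
          Nn_frfree c hg hf]
        have : (Nat.factorial (j+1) : ℚ) ≠ 0 := by positivity
        field_simp
        rw [hj]
      · rw [Polynomial.coeff_C_mul, ascPoly_coeff0]; ring
      · rw [Polynomial.coeff_C_mul, ascPoly_coeff1, if_neg hf]
        have h1 : (Nat.factorial (j+1) : ℚ) = ((j:ℚ)+1) * (Nat.factorial j) := by
          rw [Nat.factorial_succ]; push_cast; ring
        rw [h1]
        have h2 : (Nat.factorial j : ℚ) ≠ 0 := by positivity
        have h3 : ((j:ℚ) + 1) ≠ 0 := by positivity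
        field_simp

lemma Tmain (g : ℕ) : ∀ (c : List E), c.count E.ge = g →
    ∃ P : Polynomial ℚ, (∀ t : ℕ, P.eval (t : ℚ) = Nn c t) ∧ P.coeff 0 = 0 ∧
      P.coeff 1 = (if E.fr ∈ c then 0 else S (c.count E.le) (c.count E.ge)) := by
  induction g with
  | zero =>
    intro c hc
    have hg : E.ge ∉ c := by
      rw [← List.count_pos_iff]
      omega
    obtain ⟨P, he, h0, h1⟩ := T0 c.length c le_rfl hg
    refine ⟨P, he, h0, ?_⟩
    rw [h1, hc, S_zero]
  | succ g ih =>
    intro c hc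
    have hm : E.ge ∈ c := by
      by_contra h
      rw [List.count_eq_zero_of_not_mem h] at hc
      omega
    obtain ⟨c₁, c₂, rfl⟩ := List.append_of_mem hm
    have hcount : c₁.count E.ge + c₂.count E.ge = g := by
      have := hc
      simp [List.count_append, List.count_cons] at this
      omega
    have hgf : (c₁ ++ E.fr :: c₂).count E.ge = g := by
      simp [List.count_append, List.count_cons]; omega
    have hgq : (c₁ ++ E.eq :: c₂).count E.ge = g := by
      simp [List.count_append, List.count_cons]; omega
    have hgl : (c₁ ++ E.le :: c₂).count E.ge = g := by
      simp [List.count_append, List.count_cons]; omega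
    obtain ⟨Pf, hef, h0f, h1f⟩ := ih _ hgf
    obtain ⟨Pq, heq', h0q, h1q⟩ := ih _ hgq
    obtain ⟨Pl, hel, h0l, h1l⟩ := ih _ hgl
    refine ⟨Pf + Pq - Pl, ?_, ?_, ?_⟩
    · intro t
      have hx := Nn_exchange c₁ c₂ t
      have : (Nn (c₁ ++ E.ge :: c₂) t : ℚ)
          = (Nn (c₁ ++ E.fr :: c₂) t : ℚ) + (Nn (c₁ ++ E.eq :: c₂) t : ℚ)
            - (Nn (c₁ ++ E.le :: c₂) t : ℚ) := by
        have := congrArg (fun x : ℕ => (x : ℚ)) hx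
        push_cast at this
        linarith
      simp only [Polynomial.eval_sub, Polynomial.eval_add, hef, heq', hel, this]
    · simp [h0f, h0q, h0l]
    · simp only [Polynomial.coeff_sub, Polynomial.coeff_add, h1f, h1q, h1l]
      by_cases hfr : E.fr ∈ c₁ ++ E.ge :: c₂
      · have hfr' : E.fr ∈ c₁ ∨ E.fr ∈ c₂ := by
          simp [List.mem_append, List.mem_cons] at hfr
          tauto
        have m1 : E.fr ∈ c₁ ++ E.fr :: c₂ := by simp
        have m2 : E.fr ∈ c₁ ++ E.eq :: c₂ := by
          simp [List.mem_append, List.mem_cons]; tauto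
        have m3 : E.fr ∈ c₁ ++ E.le :: c₂ := by
          simp [List.mem_append, List.mem_cons]; tauto
        rw [if_pos hfr, if_pos m1, if_pos m2, if_pos m3]
        ring
      · have hfr' : ¬(E.fr ∈ c₁ ∨ E.fr ∈ c₂) := by
          intro h
          apply hfr
          simp [List.mem_append, List.mem_cons]; tauto
        have m1 : E.fr ∈ c₁ ++ E.fr :: c₂ := by simp
        have m2 : ¬ E.fr ∈ c₁ ++ E.eq :: c₂ := by
          simp [List.mem_append, List.mem_cons]; tauto
        have m3 : ¬ E.fr ∈ c₁ ++ E.le :: c₂ := by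
          simp [List.mem_append, List.mem_cons]; tauto
        rw [if_pos m1, if_neg m2, if_neg m3, if_neg hfr]
        have cj : (c₁ ++ E.ge :: c₂).count E.le = c₁.count E.le + c₂.count E.le := by
          simp [List.count_append, List.count_cons]
        have cjq : (c₁ ++ E.eq :: c₂).count E.le = c₁.count E.le + c₂.count E.le := by
          simp [List.count_append, List.count_cons]
        have cjl : (c₁ ++ E.le :: c₂).count E.le = c₁.count E.le + c₂.count E.le + 1 := by
          simp [List.count_append, List.count_cons]
          omega
        rw [cj, cjq, cjl, hc, hgq, hgl, S_pascal]
        ring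
end


end FenceAux

open FenceAux

/-- **Linear coefficient of the order polynomial of a fence poset.** For the fence
poset on `n-1` vertices whose Hasse path has `k-1` up edges and `n-k-1` down edges
(the cell poset of a border strip of a snake matroid of rank `k` on `n` elements),
the linear coefficient of the order polynomial is `1/((n-1)·C(n-2,k-1))`. -/
theorem fence_order_polynomial_linear_coeff (n k : ℕ) (hk : 1 ≤ k) (hkn : k ≤ n - 1)
    (ε : Fin (n - 2) → Bool)
    (hε : (Finset.univ.filter fun j => ε j = true).card = k - 1)
    (r : Fin (n - 1) → Fin (n - 1) → Prop)
    (hr : ∀ a b : Fin (n - 1), r a b ↔ ∃ j : Fin (n - 2),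
      (ε j = true ∧ (a : ℕ) = (j : ℕ) ∧ (b : ℕ) = (j : ℕ) + 1) ∨
      (ε j = false ∧ (a : ℕ) = (j : ℕ) + 1 ∧ (b : ℕ) = (j : ℕ)))
    (p : Polynomial ℚ)
    (hp : ∀ t : ℕ, 0 < t →
      p.eval (t : ℚ) =
        Nat.card {f : Fin (n - 1) → Fin t // ∀ a b, r a b → f a ≤ f b}) :
    p.coeff 1 = 1 / (((n - 1) * Nat.choose (n - 2) (k - 1) : ℕ) : ℚ) := by
  classical
  have hn2 : 2 ≤ n := by omega
  set c₀ : List E := List.ofFn (fun j : Fin (n - 2) => if ε j then E.le else E.ge) with hc₀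
  have hlen : c₀.length = n - 2 := by simp [hc₀]
  have hcle : c₀.count E.le = k - 1 := by
    rw [hc₀, count_ofFn, ← hε]
    congr 1
    ext j
    by_cases hj : ε j = true <;> simp [hj]
  have hcge : c₀.count E.ge = n - 1 - k := by
    rw [hc₀, count_ofFn]
    have h1 : (Finset.univ.filter fun j : Fin (n - 2) =>
          (if ε j then E.le else E.ge) = E.ge).card
        = (Finset.univ.filter fun j : Fin (n - 2) => ¬(ε j = true)).card := by
      congr 1
      ext j
      by_cases hj : ε j = true <;> simp [hj]
    rw [h1]
    have h2 := Finset.card_filter_add_card_filter_not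
      (s := (Finset.univ : Finset (Fin (n - 2)))) (p := fun j => ε j = true)
    have h3 : (Finset.univ : Finset (Fin (n - 2))).card = n - 2 := by simp
    omega
  have hfr : E.fr ∉ c₀ := by
    rw [hc₀]
    intro hm
    rw [List.mem_ofFn] at hm
    obtain ⟨j, hj⟩ := hm
    by_cases hb : ε j = true <;> simp [hb] at hj
  obtain ⟨P, heval, h0, h1⟩ := Tmain (c₀.count E.ge) c₀ rfl
  rw [if_neg hfr] at h1
  have hL1 : c₀.length + 1 = n - 1 := by omega
  have hcount : ∀ t : ℕ,
      Nat.card {f : Fin (n - 1) → Fin t // ∀ a b, r a b → f a ≤ f b} = Nn c₀ t := by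
    intro t
    rw [Nn_card, ← Nat.card_eq_fintype_card]
    apply Nat.card_congr
    refine ⟨fun f => ⟨fun i => f.1 (Fin.cast hL1 i), ?_⟩,
      fun g => ⟨fun i => g.1 (Fin.cast hL1.symm i), ?_⟩, ?_, ?_⟩
    · -- Ok c₀ (fun i => f.1 (Fin.cast hL1 i))
      intro j hj
      have hj2 : j < n - 2 := by omega
      set jj : Fin (n - 2) := ⟨j, hj2⟩ with hjj
      have hget : c₀.get ⟨j, hj⟩ = if ε jj then E.le else E.ge :=
        List.get_ofFn _ ⟨j, hj⟩
      rw [hget]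
      by_cases hb : ε jj = true
      · rw [if_pos hb]
        have hrab : r (Fin.cast hL1 ⟨j, by omega⟩) (Fin.cast hL1 ⟨j + 1, by omega⟩) :=
          (hr _ _).2 ⟨jj, Or.inl ⟨hb, rfl, rfl⟩⟩
        have hle := f.2 _ _ hrab
        rw [Fin.le_def] at hle
        exact decide_eq_true hle
      · rw [if_neg hb]
        have hrab : r (Fin.cast hL1 ⟨j + 1, by omega⟩) (Fin.cast hL1 ⟨j, by omega⟩) :=
          (hr _ _).2 ⟨jj, Or.inr ⟨by simpa using hb, rfl, rfl⟩⟩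
        have hle := f.2 _ _ hrab
        rw [Fin.le_def] at hle
        exact decide_eq_true hle
    · -- Pred (fun i => g.1 (Fin.cast hL1.symm i))
      intro a b hab
      rw [hr] at hab
      obtain ⟨jj, hcase⟩ := hab
      have hjlt : (jj : ℕ) < c₀.length := by
        have := jj.isLt; omega
      have hok := g.2 jj.val hjlt
      have hget : c₀.get ⟨jj.val, hjlt⟩ = if ε jj then E.le else E.ge :=
        List.get_ofFn _ ⟨jj.val, hjlt⟩
      rw [hget] at hok
      rcases hcase with ⟨hb, ha, hbv⟩ | ⟨hb, ha, hbv⟩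
      · rw [if_pos hb] at hok
        have e1 : Fin.cast hL1.symm a = ⟨jj.val, by omega⟩ := by
          apply Fin.ext; simpa using ha
        have e2 : Fin.cast hL1.symm b = ⟨jj.val + 1, by omega⟩ := by
          apply Fin.ext; simpa using hbv
        rw [Fin.le_def]
        show (g.1 (Fin.cast hL1.symm a) : ℕ) ≤ (g.1 (Fin.cast hL1.symm b) : ℕ)
        rw [e1, e2]
        exact of_decide_eq_true hok
      · rw [if_neg (by simp [hb])] at hok
        have e1 : Fin.cast hL1.symm a = ⟨jj.val + 1, by omega⟩ := by
          apply Fin.ext; simpa using ha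
        have e2 : Fin.cast hL1.symm b = ⟨jj.val, by omega⟩ := by
          apply Fin.ext; simpa using hbv
        rw [Fin.le_def]
        show (g.1 (Fin.cast hL1.symm a) : ℕ) ≤ (g.1 (Fin.cast hL1.symm b) : ℕ)
        rw [e1, e2]
        exact of_decide_eq_true hok
    · intro f
      apply Subtype.ext
      funext i
      rfl
    · intro g
      apply Subtype.ext
      funext i
      rfl
  have hpP : p = P := by
    apply Polynomial.eq_of_infinite_eval_eq
    apply Set.infinite_of_injective_forall_mem
      (f := fun m : ℕ => ((m + 1 : ℕ) : ℚ))
    · intro a b hab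
      simpa using hab
    · intro m
      show p.eval _ = P.eval _
      rw [hp (m + 1) (Nat.succ_pos m), heval (m + 1), hcount (m + 1)]
  rw [hpP, h1, S_val, hcle, hcge]
  have hsum : k - 1 + (n - 1 - k) + 1 = n - 1 := by omega
  rw [hsum]
  have hk2 : k - 1 ≤ n - 2 := by omega
  have hnat : (n - 2).choose (k - 1) * ((k - 1).factorial * (n - 1 - k).factorial) * (n - 1)
      = (n - 1).factorial := by
    have hcm := Nat.choose_mul_factorial_mul_factorial hk2
    have h4 : n - 2 - (k - 1) = n - 1 - k := by omega
    rw [h4] at hcm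
    have h5 : (n - 1).factorial = (n - 1) * (n - 2).factorial := by
      rw [show n - 1 = (n - 2) + 1 by omega, Nat.factorial_succ]
    rw [h5, ← hcm]
    ring
  have hpos : (0 : ℚ) < ((n - 1) * Nat.choose (n - 2) (k - 1) : ℕ) := by
    have hcp := Nat.choose_pos hk2
    have : 0 < (n - 1) * Nat.choose (n - 2) (k - 1) := by
      have : 0 < n - 1 := by omega
      positivity
    exact_mod_cast this
  rw [div_eq_div_iff (by positivity) (ne_of_gt hpos), one_mul]
  have : ((k - 1).factorial * (n - 1 - k).factorial * ((n - 1) * Nat.choose (n - 2) (k - 1)) : ℕ)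
      = (n - 1).factorial := by
    rw [← hnat]; ring
  exact_mod_cast congrArg (fun x : ℕ => (x : ℚ)) this
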